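/- Let f : ℝ → ℂ be integrable and supported on a compact subset of (-∞, 0]. If the entire function Lf(z) = ∫ f(t) e^{-zt} dt is bounded on all of ℂ, then Lf is constant equal to 0 and f = 0 a.e. -/

import Mathlib

open MeasureTheory Set

noncomputable def laplace (f : ℝ → ℂ) (z : ℂ) : ℂ :=
  ∫ t : ℝ, f t * Complex.exp (-z * t)

/-!
`laplace f` is entire because the compact support of `f` lets one differentiate under the
integral sign. When `f` vanishes on `(0, ∞)`, dominated convergence gives `laplace f x → 0` as
`x → -∞` along the reals, so Liouville's theorem forces a bounded `laplace f` to vanish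
identically. On the imaginary axis `laplace f` is the Fourier transform of `f`, and an integrable
function with vanishing Fourier transform is zero almost everywhere.
-/

open Filter Topology FourierTransform Function Metric
open scoped Complex SchwartzMap

lemma norm_cexp_neg_mul_ofReal (z : ℂ) (t : ℝ) :
    ‖cexp (-z * t)‖ = Real.exp (-(z.re * t)) := by
  simp [Complex.norm_exp, Complex.mul_re]

lemma norm_cexp_neg_mul_ofReal_le {z : ℂ} {t R : ℝ} (ht : |t| ≤ R) :
    ‖cexp (-z * t)‖ ≤ Real.exp (‖z‖ * R) := by
  rw [norm_cexp_neg_mul_ofReal, Real.exp_le_exp]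
  calc -(z.re * t) ≤ |z.re| * |t| := (neg_le_abs _).trans_eq (abs_mul _ _)
    _ ≤ ‖z‖ * R := mul_le_mul (Complex.abs_re_le_norm z) ht (abs_nonneg _) (norm_nonneg z)

section BoundedSupport

variable {f : ℝ → ℂ} {R : ℝ}

lemma norm_mul_cexp_le_of_support_subset (hR : support f ⊆ closedBall 0 R) (z : ℂ) (t : ℝ) :
    ‖f t * cexp (-z * t)‖ ≤ ‖f t‖ * Real.exp (‖z‖ * R) := by
  by_cases ht : f t = 0
  · simp [ht]
  rw [norm_mul]
  gcongr
  exact norm_cexp_neg_mul_ofReal_le (by simpa using hR ht)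

lemma integrable_mul_cexp_of_support_subset (hf : Integrable f) (hR : support f ⊆ closedBall 0 R)
    (z : ℂ) : Integrable fun t : ℝ => f t * cexp (-z * t) :=
  (hf.norm.mul_const _).mono' (hf.1.mul (by fun_prop))
    (.of_forall (norm_mul_cexp_le_of_support_subset hR z))

lemma hasDerivAt_laplace (hf : Integrable f) (hR : support f ⊆ closedBall 0 R) (hR₀ : 0 ≤ R)
    (z₀ : ℂ) : HasDerivAt (laplace f) (laplace (fun t => -t * f t) z₀) z₀ := by
  set g : ℝ → ℂ := fun t => -t * f t
  have hgR : support g ⊆ closedBall 0 R := (support_mul_subset_right _ _).trans hR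
  have hg : Integrable g := by
    refine (hf.norm.const_mul R).mono' (by fun_prop) (.of_forall fun t => ?_)
    by_cases ht : f t = 0
    · simp [g, ht]
    simpa [g] using mul_le_mul_of_nonneg_right (by simpa using hR ht) (norm_nonneg (f t))
  refine (hasDerivAt_integral_of_dominated_loc_of_deriv_le (ball_mem_nhds z₀ one_pos)
    (.of_forall fun z => (integrable_mul_cexp_of_support_subset hf hR z).1)
    (integrable_mul_cexp_of_support_subset hf hR z₀)
    (F' := fun z t => g t * cexp (-z * t)) (integrable_mul_cexp_of_support_subset hg hgR z₀).1
    (bound := fun t => ‖g t‖ * Real.exp ((‖z₀‖ + 1) * R)) ?_ (hg.norm.mul_const _) ?_).2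
  · refine .of_forall fun t z hz => (norm_mul_cexp_le_of_support_subset hgR z t).trans ?_
    gcongr
    linarith [norm_le_norm_add_norm_sub' z z₀, mem_ball_iff_norm.1 hz]
  · refine .of_forall fun t z _ => ?_
    exact ((((hasDerivAt_neg z).mul_const (t : ℂ)).cexp).const_mul (f t)).congr_deriv (by ring)

end BoundedSupport

theorem differentiable_laplace {f : ℝ → ℂ} (hf : Integrable f) (hc : HasCompactSupport f) :
    Differentiable ℂ (laplace f) := by
  obtain ⟨R, hR₀, hR⟩ := hc.isBounded.subset_closedBall_lt 0 0
  exact fun z => (hasDerivAt_laplace hf ((subset_tsupport f).trans hR) hR₀.le z).differentiableAt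

theorem tendsto_laplace_atBot {f : ℝ → ℂ} (hf : Integrable f) (hf₀ : support f ⊆ Iic 0) :
    Tendsto (fun x : ℝ => laplace f x) atBot (𝓝 0) := by
  have hbound : ∀ x ≤ (0 : ℝ), ∀ t, ‖f t * cexp (-x * t)‖ ≤ ‖f t‖ := by
    intro x hx t
    by_cases ht : f t = 0
    · simp [ht]
    rw [norm_mul, norm_cexp_neg_mul_ofReal, Complex.ofReal_re]
    refine mul_le_of_le_one_right (norm_nonneg _) (Real.exp_le_one_iff.2 ?_)
    nlinarith [show t ≤ 0 from hf₀ ht]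
  have hlim : ∀ t ≠ (0 : ℝ), Tendsto (fun x : ℝ => f t * cexp (-x * t)) atBot (𝓝 0) := by
    intro t ht₀
    by_cases ht : f t = 0
    · simp [ht]
    have hneg : t < 0 := lt_of_le_of_ne (hf₀ ht) ht₀
    rw [tendsto_zero_iff_norm_tendsto_zero]
    simp only [norm_mul, norm_cexp_neg_mul_ofReal, Complex.ofReal_re]
    simpa using (Real.tendsto_exp_atBot.comp
      (tendsto_id.atBot_mul_const (neg_pos.2 hneg))).const_mul ‖f t‖
  simpa [laplace] using tendsto_integral_filter_of_dominated_convergence (fun t => ‖f t‖)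
    (.of_forall fun x => (hf.1.mul (by fun_prop)))
    (eventually_le_atBot 0 |>.mono fun x hx => .of_forall (hbound x hx)) hf.norm
    ((volume.ae_ne 0).mono hlim)

theorem Differentiable.apply_eq_of_isBounded_of_tendsto {E F α : Type*}
    [NormedAddCommGroup E] [NormedSpace ℂ E] [NormedAddCommGroup F] [NormedSpace ℂ F]
    {g : E → F} (hg : Differentiable ℂ g) (hb : Bornology.IsBounded (range g))
    {l : Filter α} [l.NeBot] {u : α → E} {c : F} (hc : Tendsto (g ∘ u) l (𝓝 c)) (z : E) :
    g z = c :=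
  tendsto_nhds_unique tendsto_const_nhds <|
    hc.congr fun x => hg.apply_eq_apply_of_bounded hb (u x) z

theorem fourier_eq_laplace (f : ℝ → ℂ) (w : ℝ) :
    𝓕 f w = laplace f (2 * Real.pi * w * Complex.I) := by
  simp only [Real.fourier_real_eq_integral_exp_smul, laplace, smul_eq_mul]
  congr 1 with t
  rw [mul_comm]
  push_cast
  ring_nf

theorem MeasureTheory.Integrable.ae_eq_zero_of_fourier_eq_zero {V E : Type*}
    [NormedAddCommGroup V] [InnerProductSpace ℝ V] [FiniteDimensional ℝ V]
    [MeasurableSpace V] [BorelSpace V]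
    [NormedAddCommGroup E] [NormedSpace ℂ E] [CompleteSpace E]
    {f : V → E} (hf : Integrable f) (h : 𝓕 f = 0) : f =ᵐ[volume] 0 := by
  refine ae_eq_zero_of_integral_contDiff_smul_eq_zero hf.locallyIntegrable fun g hg hgc => ?_
  let φ : 𝓢(V, ℂ) := (hgc.comp_left Complex.ofReal_zero).toSchwartzMap
    (Complex.ofRealCLM.contDiff.comp hg)
  calc ∫ x, g x • f x = ∫ x, 𝓕 (⇑(𝓕⁻ φ : 𝓢(V, ℂ))) x • f x := by
        rw [← SchwartzMap.fourier_coe, FourierTransform.fourier_fourierInv_eq]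
        rfl
    _ = ∫ ξ, (𝓕⁻ φ : 𝓢(V, ℂ)) ξ • 𝓕 f ξ := by
        have := VectorFourier.integral_fourierIntegral_smul_eq_flip (L := innerₗ V)
          Real.continuous_fourierChar continuous_inner ((𝓕⁻ φ).integrable (μ := volume)) hf
        rw [flip_innerₗ] at this
        exact this
    _ = 0 := by simp [h]

theorem laplace_bounded_entire_eq_zero
    (f : ℝ → ℂ) (hf : Integrable f)
    (K : Set ℝ) (hK : IsCompact K) (hK0 : K ⊆ Iic 0)
    (hsupp : ∀ t ∉ K, f t = 0)
    (hbd : ∃ M : ℝ, ∀ z : ℂ, ‖laplace f z‖ ≤ M) :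
    (∀ z : ℂ, laplace f z = 0) ∧ ∀ᵐ t : ℝ, f t = 0 := by
  have hfK : support f ⊆ K := support_subset_iff'.2 hsupp
  obtain ⟨M, hM⟩ := hbd
  have hb : Bornology.IsBounded (range (laplace f)) :=
    isBounded_iff_forall_norm_le.2 ⟨M, forall_mem_range.2 hM⟩
  have hzero : ∀ z, laplace f z = 0 :=
    (differentiable_laplace hf (.intro hK hsupp)).apply_eq_of_isBounded_of_tendsto hb
      (tendsto_laplace_atBot hf (hfK.trans hK0))
  refine ⟨hzero, hf.ae_eq_zero_of_fourier_eq_zero ?_⟩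
  ext w
  rw [fourier_eq_laplace, hzero, Pi.zero_apply]
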